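/- Let d ≥ 2, let φ : ℝᵈ → ℝ be a nonnegative, strictly convex, continuously differentiable function, and set ψ = |·|² + φ. Fix ξ ∈ ℝᵈ. For y ≠ 0, let λ(y) be the unique nonnegative real number satisfying |ξ/2 − y|² + |ξ/2 + y|² − 2|ξ/2|² = ψ(ξ/2 − λ(y)y) + ψ(ξ/2 + λ(y)y) − 2ψ(ξ/2), and define T : ℝᵈ \ {0} → ℝᵈ by T(y) = λ(y)·y. Then T is continuously differentiable on ℝᵈ \ {0}, and the Jacobian determinant of T satisfies |det T′(y)| < 1 for every y ≠ 0. -/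

import Mathlib

/-!
Write `c = ξ/2` and `F z = ψ (c + z) + ψ (c - z) - 2 ψ c`. By the parallelogram law the defining
equation of `λ` reads `F (λ(y) y) = 2 ‖y‖²`. Strict convexity of `φ` makes
`t ↦ F (t y) - 2 t² ‖y‖²` have positive derivative for `t > 0`, so `λ(y)` is the unique root, lies
in `(0, 1)`, and the implicit function theorem makes `λ` of class `C¹` away from the origin.
Now `T′(y) = λ id + (Dλ(y) ·) y` has determinant `λ^(d-1) (λ + Dλ(y) y)`. Differentiating
`F (λ(y) y) = 2 ‖y‖²` in the direction `y` gives `(λ + Dλ(y) y) · DF(λ y) y = 4 ‖y‖²`, and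
`DF(λ y) y > 4 λ ‖y‖²`, so `0 < λ (λ + Dλ(y) y) < 1`; with `λ < 1` and `d ≥ 2` this bounds the
determinant.
-/

open Filter Topology Set

noncomputable section

def secondDiff {G : Type*} [AddGroup G] (f : G → ℝ) (c z : G) : ℝ :=
  f (c + z) + f (c - z) - 2 * f c

@[simp]
theorem secondDiff_zero {G : Type*} [AddGroup G] (f : G → ℝ) (c : G) : secondDiff f c 0 = 0 := by
  simp only [secondDiff, add_zero, sub_zero]; ring

open Matrix in
theorem LinearMap.det_id_add_smulRight {R M : Type*} [CommRing R] [AddCommGroup M] [Module R M]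
    [Module.Free R M] [Module.Finite R M] (ℓ : M →ₗ[R] R) (v : M) :
    LinearMap.det (LinearMap.id + ℓ.smulRight v) = 1 + ℓ v := by
  classical
  let b := Module.Free.chooseBasis R M
  have hmat : LinearMap.toMatrix b b (LinearMap.id + ℓ.smulRight v) =
      1 + vecMulVec (b.repr v) (ℓ ∘ b) := by
    ext i j
    simp [Matrix.one_apply]
  rw [← LinearMap.det_toMatrix b, hmat, vecMulVec_eq Unit, det_one_add_replicateCol_mul_replicateRow]
  congr 1
  conv_rhs => rw [← b.sum_repr v]
  simp only [dotProduct, Function.comp_apply, map_sum, map_smul, smul_eq_mul, mul_comm]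

theorem ContinuousLinearMap.isInvertible_of_apply_one_ne_zero {𝕜 : Type*}
    [NontriviallyNormedField 𝕜] {L : 𝕜 →L[𝕜] 𝕜} (h : L 1 ≠ 0) : L.IsInvertible :=
  .of_inverse (g := (L 1)⁻¹ • .id 𝕜 𝕜) (ext_ring (by simp [h])) (ext_ring (by simp [h]))

section NormedSpace

variable {E : Type*} [NormedAddCommGroup E] [NormedSpace ℝ E] {f : E → ℝ}

theorem DifferentiableAt.hasDerivAt_comp_add_smul {a v : E} {t : ℝ}
    (hf : DifferentiableAt ℝ f (a + t • v)) :
    HasDerivAt (fun s : ℝ => f (a + s • v)) (fderiv ℝ f (a + t • v) v) t := by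
  have := hf.hasFDerivAt.comp_hasDerivAt t (((hasDerivAt_id t).smul_const v).const_add a)
  rwa [one_smul] at this

theorem StrictConvexOn.comp_add_smul (hf : StrictConvexOn ℝ univ f) (a : E) {v : E}
    (hv : v ≠ 0) : StrictConvexOn ℝ univ (fun t : ℝ => f (a + t • v)) := by
  refine ⟨convex_univ, fun s _ t _ hst α β hα hβ hαβ => ?_⟩
  have hne : a + s • v ≠ a + t • v := fun h => hst (smul_left_injective ℝ hv (add_left_cancel h))
  convert hf.2 trivial trivial hne hα hβ hαβ using 2
  linear_combination (norm := module) - hαβ • a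

theorem StrictConvexOn.fderiv_apply_lt_of_lt (hf : StrictConvexOn ℝ univ f)
    (hd : Differentiable ℝ f) (a : E) {v : E} (hv : v ≠ 0) {s t : ℝ} (hst : s < t) :
    fderiv ℝ f (a + s • v) v < fderiv ℝ f (a + t • v) v := by
  have hderiv (r : ℝ) := (hd (a + r • v)).hasDerivAt_comp_add_smul
  simpa only [(hderiv _).deriv] using (hf.comp_add_smul a hv).strictMonoOn_deriv
    (fun r _ => (hderiv r).differentiableAt) trivial trivial hst

theorem ContDiff.secondDiff (c : E) {n : WithTop ℕ∞} (hf : ContDiff ℝ n f) :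
    ContDiff ℝ n (secondDiff f c) := by
  unfold _root_.secondDiff
  fun_prop

theorem hasFDerivAt_secondDiff (c : E) (hf : Differentiable ℝ f) (z : E) :
    HasFDerivAt (secondDiff f c) (fderiv ℝ f (c + z) - fderiv ℝ f (c - z)) z := by
  have hadd := (hf (c + z)).hasFDerivAt.comp z ((hasFDerivAt_id z).const_add c)
  have hsub := (hf (c - z)).hasFDerivAt.comp z ((hasFDerivAt_id z).const_sub c)
  refine HasFDerivAt.congr_fderiv (f := secondDiff f c) ((hadd.add hsub).sub_const (2 * f c)) ?_
  ext v
  simp [sub_eq_add_neg]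

end NormedSpace

section InnerProductSpace

variable {E : Type*} [NormedAddCommGroup E] [InnerProductSpace ℝ E] {F : E → ℝ}

theorem secondDiff_norm_sq_add (f : E → ℝ) (c : E) :
    secondDiff (fun x => ‖x‖ ^ 2 + f x) c = fun z => 2 * ‖z‖ ^ 2 + secondDiff f c z := by
  ext z
  simp only [secondDiff, norm_add_sq_real, norm_sub_sq_real]
  ring

theorem StrictConvexOn.lt_fderiv_secondDiff_norm_sq_add_smul_apply {f : E → ℝ}
    (hf : StrictConvexOn ℝ univ f) (hd : Differentiable ℝ f) (c : E) {y : E} (hy : y ≠ 0) {t : ℝ} (ht : 0 < t) :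
    4 * t * ‖y‖ ^ 2 < fderiv ℝ (secondDiff (fun x => ‖x‖ ^ 2 + f x) c) (t • y) y := by
  rw [secondDiff_norm_sq_add]
  have h := ((hasFDerivAt_id (t • y)).norm_sq.const_mul 2).add (hasFDerivAt_secondDiff c hd (t • y))
  rw [HasFDerivAt.fderiv (f := fun z => 2 * ‖z‖ ^ 2 + secondDiff f c z) h]
  have hmono := hf.fderiv_apply_lt_of_lt hd c hy (neg_lt_self ht)
  rw [neg_smul, ← sub_eq_add_neg] at hmono
  simp only [id_eq, map_smul, ContinuousLinearMap.comp_id, add_apply, smul_apply,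
    coe_innerSL_apply, real_inner_self_eq_norm_sq, smul_eq_mul, nsmul_eq_mul, Nat.cast_ofNat,
    sub_apply]
  linarith

/-- `t ↦ F (t • y) - 2 ‖t • y‖²` has positive derivative for `t > 0`, along every ray `y ≠ 0`. -/
def RadialDerivGtTwoNormSq (F : E → ℝ) : Prop :=
  ∀ y ≠ 0, ∀ t > 0, 4 * t * ‖y‖ ^ 2 < fderiv ℝ F (t • y) y

def IsRadialRoot (F : E → ℝ) (lam : E → ℝ) : Prop :=
  ∀ y ≠ 0, 0 ≤ lam y ∧ F (lam y • y) = 2 * ‖y‖ ^ 2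

theorem strictMonoOn_apply_smul_sub (hF : Differentiable ℝ F) {y : E}
    (hF' : ∀ t > 0, 4 * t * ‖y‖ ^ 2 < fderiv ℝ F (t • y) y) :
    StrictMonoOn (fun t : ℝ => F (t • y) - 2 * t ^ 2 * ‖y‖ ^ 2) (Ici 0) := by
  have hderiv (t : ℝ) : HasDerivAt (fun t : ℝ => F (t • y) - 2 * t ^ 2 * ‖y‖ ^ 2)
      (fderiv ℝ F (t • y) y - 4 * t * ‖y‖ ^ 2) t := by
    have hF_t := (hF (0 + t • y)).hasDerivAt_comp_add_smul
    simp only [zero_add] at hF_t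
    exact (hF_t.sub (((hasDerivAt_pow 2 t).const_mul 2).mul_const (‖y‖ ^ 2))).congr_deriv
      (by push_cast; ring)
  refine strictMonoOn_of_deriv_pos (convex_Ici 0)
    (fun t _ => (hderiv t).continuousAt.continuousWithinAt) fun t ht => ?_
  rw [interior_Ici] at ht
  rw [(hderiv t).deriv, sub_pos]
  exact hF' t ht

theorem strictMonoOn_apply_smul (hF : Differentiable ℝ F) {y : E}
    (hF' : ∀ t > 0, 4 * t * ‖y‖ ^ 2 < fderiv ℝ F (t • y) y) :
    StrictMonoOn (fun t : ℝ => F (t • y)) (Ici 0) := by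
  have hsq : MonotoneOn (fun t : ℝ => 2 * t ^ 2 * ‖y‖ ^ 2) (Ici 0) :=
    fun s (hs : 0 ≤ s) t _ hst => by dsimp only; gcongr
  simpa using (strictMonoOn_apply_smul_sub hF hF').add_monotone hsq

theorem IsRadialRoot.pos_and_lt_one {lam : E → ℝ} (hlam : IsRadialRoot F lam) (hF0 : F 0 = 0)
    (hF : Differentiable ℝ F) (hF' : RadialDerivGtTwoNormSq F) {y : E} (hy : y ≠ 0) :
    0 < lam y ∧ lam y < 1 := by
  obtain ⟨hl, heq⟩ := hlam y hy
  have hy2 : 0 < ‖y‖ ^ 2 := by positivity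
  have hl0 : 0 < lam y := by
    refine hl.lt_of_ne fun h => ?_
    rw [← h, zero_smul, hF0] at heq
    linarith
  refine ⟨hl0, ?_⟩
  have := strictMonoOn_apply_smul_sub hF (hF' y hy) self_mem_Ici hl hl0
  simp only [zero_smul, hF0, heq] at this
  have : 0 < 1 - lam y ^ 2 := by nlinarith
  nlinarith

theorem IsRadialRoot.contDiffAt [CompleteSpace E] {lam : E → ℝ} (hlam : IsRadialRoot F lam)
    (hF0 : F 0 = 0) (hF : ContDiff ℝ 1 F) (hF' : RadialDerivGtTwoNormSq F) {y₀ : E}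
    (hy₀ : y₀ ≠ 0) : ContDiffAt ℝ 1 lam y₀ := by
  have hFd := hF.differentiable one_ne_zero
  have hl0 := (hlam.pos_and_lt_one hF0 hFd hF' hy₀).1
  set f : E × ℝ → ℝ := fun p => F (p.2 • p.1) - 2 * ‖p.1‖ ^ 2
  have hf : ContDiffAt ℝ 1 f (y₀, lam y₀) :=
    ((hF.comp (contDiff_snd.smul contDiff_fst)).sub
      (contDiff_const.mul ((contDiff_norm_sq ℝ).comp contDiff_fst))).contDiffAt
  set L := fderiv ℝ f (y₀, lam y₀) ∘L .inr ℝ E ℝ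
  have hL : L 1 = fderiv ℝ F (lam y₀ • y₀) y₀ := by
    have h₁ : HasDerivAt (fun t => f (y₀, t)) (L 1) (lam y₀) :=
      ((hf.differentiableAt one_ne_zero).hasFDerivAt.comp (lam y₀)
        (hasFDerivAt_prodMk_right y₀ (lam y₀))).hasDerivAt
    have h₂ := ((hFd (0 + lam y₀ • y₀)).hasDerivAt_comp_add_smul).sub_const (2 * ‖y₀‖ ^ 2)
    simp only [zero_add] at h₂
    exact h₁.unique h₂
  have hinv : L.IsInvertible := by
    refine ContinuousLinearMap.isInvertible_of_apply_one_ne_zero (hL ▸ ne_of_gt ?_)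
    have h4 : 0 < 4 * lam y₀ * ‖y₀‖ ^ 2 := by positivity
    exact h4.trans (hF' y₀ hy₀ _ hl0)
  set ψ := hf.implicitFunction one_ne_zero hinv
  have hψ : ContDiffAt ℝ 1 ψ y₀ := hf.contDiffAt_implicitFunction one_ne_zero hinv
  have hψ_pos : ∀ᶠ x in 𝓝 y₀, 0 < ψ x := by
    refine hψ.continuousAt.eventually (lt_mem_nhds ?_)
    rwa [show ψ y₀ = lam y₀ from hf.implicitFunction_apply_self one_ne_zero hinv]
  -- `ψ` solves the same equation and stays positive, so it is the unique root `lam`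
  have hlam_eq : lam =ᶠ[𝓝 y₀] ψ := by
    filter_upwards [hf.eventually_apply_implicitFunction one_ne_zero hinv, hψ_pos,
      eventually_ne_nhds hy₀] with x hfx hψx hx
    refine (strictMonoOn_apply_smul hFd (hF' x hx)).injOn (hlam x hx).1 hψx.le ?_
    simp only [f, (hlam y₀ hy₀).2, sub_self, sub_eq_zero] at hfx
    rw [(hlam x hx).2]
    exact hfx.symm
  exact hψ.congr_of_eventuallyEq hlam_eq

theorem IsRadialRoot.mul_add_fderiv_mem_Ioo {lam : E → ℝ} (hlam : IsRadialRoot F lam)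
    (hF0 : F 0 = 0) (hF : Differentiable ℝ F) (hF' : RadialDerivGtTwoNormSq F) {y₀ : E}
    (hy₀ : y₀ ≠ 0) (hlamd : DifferentiableAt ℝ lam y₀) :
    lam y₀ * (lam y₀ + fderiv ℝ lam y₀ y₀) ∈ Ioo 0 1 := by
  have hl0 := (hlam.pos_and_lt_one hF0 hF hF' hy₀).1
  set μ := lam y₀ + fderiv ℝ lam y₀ y₀
  set κ := fderiv ℝ F (lam y₀ • y₀) y₀
  have hκ : 4 * lam y₀ * ‖y₀‖ ^ 2 < κ := hF' y₀ hy₀ _ hl0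
  -- differentiate `F (lam y • y) = 2 ‖y‖²` at `y₀` in the direction `y₀`
  have hμκ : μ * κ = 4 * ‖y₀‖ ^ 2 := by
    have hL := (hF _).hasFDerivAt.comp y₀ (hlamd.hasFDerivAt.smul (hasFDerivAt_id y₀))
    have hR := (hasFDerivAt_id y₀).norm_sq.const_mul (2 : ℝ)
    have heq : (fun y => F (lam y • y)) =ᶠ[𝓝 y₀] fun y => 2 * ‖y‖ ^ 2 := by
      filter_upwards [eventually_ne_nhds hy₀] with y hy using (hlam y hy).2
    have := congrArg (· y₀) ((hL.congr_of_eventuallyEq heq.symm).unique hR)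
    simp only [Pi.smul_apply', id, ContinuousLinearMap.comp_apply, add_apply, smul_apply,
      ContinuousLinearMap.id_apply, ContinuousLinearMap.smulRight_apply, ← add_smul, map_smul,
      innerSL_apply_apply, real_inner_self_eq_norm_sq, smul_eq_mul, nsmul_eq_mul,
      Nat.cast_ofNat] at this
    linarith
  have hy2 : 0 < ‖y₀‖ ^ 2 := by positivity
  have hκ0 : 0 < κ := by nlinarith
  have hμ0 : 0 < μ := pos_of_mul_pos_left (hμκ ▸ by positivity) hκ0.le
  refine ⟨by positivity, ?_⟩
  nlinarith

theorem IsRadialRoot.contDiffOn_smul [CompleteSpace E] {lam : E → ℝ} (hlam : IsRadialRoot F lam)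
    (hF0 : F 0 = 0) (hF : ContDiff ℝ 1 F) (hF' : RadialDerivGtTwoNormSq F) :
    ContDiffOn ℝ 1 (fun y => lam y • y) {0}ᶜ := fun _ hy =>
  ((hlam.contDiffAt hF0 hF hF' hy).smul contDiffAt_id).contDiffWithinAt

theorem IsRadialRoot.abs_det_fderiv_smul_lt_one [FiniteDimensional ℝ E] {lam : E → ℝ}
    (hlam : IsRadialRoot F lam) (hE : 2 ≤ Module.finrank ℝ E) (hF0 : F 0 = 0)
    (hF : ContDiff ℝ 1 F) (hF' : RadialDerivGtTwoNormSq F) {y₀ : E} (hy₀ : y₀ ≠ 0) :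
    |LinearMap.det (fderiv ℝ (fun y => lam y • y) y₀ : E →ₗ[ℝ] E)| < 1 := by
  have hFd := hF.differentiable one_ne_zero
  obtain ⟨hl0, hl1⟩ := hlam.pos_and_lt_one hF0 hFd hF' hy₀
  have hlamd := (hlam.contDiffAt hF0 hF hF' hy₀).differentiableAt one_ne_zero
  obtain ⟨hμ0, hμ1⟩ := hlam.mul_add_fderiv_mem_Ioo hF0 hFd hF' hy₀ hlamd
  set ℓ := fderiv ℝ lam y₀
  have hT : (fderiv ℝ (fun y => lam y • y) y₀ : E →ₗ[ℝ] E) =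
      lam y₀ • (LinearMap.id + ((lam y₀)⁻¹ • (ℓ : E →ₗ[ℝ] ℝ)).smulRight y₀) := by
    rw [HasFDerivAt.fderiv (f := fun y => lam y • y) (hlamd.hasFDerivAt.smul (hasFDerivAt_id y₀))]
    ext v
    simp [smul_smul, hl0.ne', ℓ]
  obtain ⟨k, hk⟩ : ∃ k, Module.finrank ℝ E = k + 2 := ⟨_, (Nat.sub_add_cancel hE).symm⟩
  have hdet : lam y₀ ^ Module.finrank ℝ E * (1 + ((lam y₀)⁻¹ • (ℓ : E →ₗ[ℝ] ℝ)) y₀) =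
      lam y₀ ^ k * (lam y₀ * (lam y₀ + ℓ y₀)) := by
    rw [hk, LinearMap.smul_apply, ContinuousLinearMap.coe_coe, smul_eq_mul]
    field_simp
    ring
  rw [hT, LinearMap.det_smul, LinearMap.det_id_add_smulRight, hdet, abs_of_pos (by positivity)]
  exact mul_lt_one_of_nonneg_of_lt_one_right (pow_le_one₀ hl0.le hl1.le) hμ0.le hμ1

end InnerProductSpace

theorem statement14_general (d : ℕ) (hd : 2 ≤ d)
    (φ : EuclideanSpace ℝ (Fin d) → ℝ)
    (hφC1 : ContDiff ℝ 1 φ) (hφsconv : StrictConvexOn ℝ Set.univ φ)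
    (ψ : EuclideanSpace ℝ (Fin d) → ℝ) (hψ : ψ = fun y => ‖y‖ ^ 2 + φ y)
    (ξ : EuclideanSpace ℝ (Fin d))
    (lam : EuclideanSpace ℝ (Fin d) → ℝ)
    (hlam : ∀ y : EuclideanSpace ℝ (Fin d), y ≠ 0 → 0 ≤ lam y ∧
      ‖(2:ℝ)⁻¹ • ξ - y‖ ^ 2 + ‖(2:ℝ)⁻¹ • ξ + y‖ ^ 2 - 2 * ‖(2:ℝ)⁻¹ • ξ‖ ^ 2 =
        ψ ((2:ℝ)⁻¹ • ξ - lam y • y) + ψ ((2:ℝ)⁻¹ • ξ + lam y • y) -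
          2 * ψ ((2:ℝ)⁻¹ • ξ))
    (T : EuclideanSpace ℝ (Fin d) → EuclideanSpace ℝ (Fin d))
    (hT : T = fun y => lam y • y) :
    ContDiffOn ℝ 1 T {(0 : EuclideanSpace ℝ (Fin d))}ᶜ ∧
    ∀ y : EuclideanSpace ℝ (Fin d), y ≠ 0 →
      |LinearMap.det (fderiv ℝ T y : EuclideanSpace ℝ (Fin d) →ₗ[ℝ] EuclideanSpace ℝ (Fin d))| < 1 := by
  subst hψ hT
  set c := (2:ℝ)⁻¹ • ξ
  set F := secondDiff (fun x => ‖x‖ ^ 2 + φ x) c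
  have hF : ContDiff ℝ 1 F := ((contDiff_norm_sq ℝ).add hφC1).secondDiff c
  have hF' : RadialDerivGtTwoNormSq F := fun y hy t ht =>
    hφsconv.lt_fderiv_secondDiff_norm_sq_add_smul_apply (hφC1.differentiable one_ne_zero) c hy ht
  have hlamF : IsRadialRoot F lam := fun y hy => by
    obtain ⟨hl, heq⟩ := hlam y hy
    refine ⟨hl, ?_⟩
    simp only [F, secondDiff] at heq ⊢
    linarith [norm_sub_sq_real c y, norm_add_sq_real c y]
  have hF0 : F 0 = 0 := secondDiff_zero _ c
  exact ⟨hlamF.contDiffOn_smul hF0 hF hF',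
    fun y hy => hlamF.abs_det_fderiv_smul_lt_one (by simpa using hd) hF0 hF hF' hy⟩

theorem statement14 (d : ℕ) (hd : 2 ≤ d)
    (φ : EuclideanSpace ℝ (Fin d) → ℝ) (hφ0 : ∀ y, 0 ≤ φ y)
    (hφC1 : ContDiff ℝ 1 φ) (hφsconv : StrictConvexOn ℝ Set.univ φ)
    (ψ : EuclideanSpace ℝ (Fin d) → ℝ) (hψ : ψ = fun y => ‖y‖ ^ 2 + φ y)
    (ξ : EuclideanSpace ℝ (Fin d))
    (lam : EuclideanSpace ℝ (Fin d) → ℝ)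
    (hlam : ∀ y : EuclideanSpace ℝ (Fin d), y ≠ 0 → 0 ≤ lam y ∧
      ‖(2:ℝ)⁻¹ • ξ - y‖ ^ 2 + ‖(2:ℝ)⁻¹ • ξ + y‖ ^ 2 - 2 * ‖(2:ℝ)⁻¹ • ξ‖ ^ 2 =
        ψ ((2:ℝ)⁻¹ • ξ - lam y • y) + ψ ((2:ℝ)⁻¹ • ξ + lam y • y) -
          2 * ψ ((2:ℝ)⁻¹ • ξ))
    (T : EuclideanSpace ℝ (Fin d) → EuclideanSpace ℝ (Fin d))
    (hT : T = fun y => lam y • y) :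
    ContDiffOn ℝ 1 T {(0 : EuclideanSpace ℝ (Fin d))}ᶜ ∧
    ∀ y : EuclideanSpace ℝ (Fin d), y ≠ 0 →
      |LinearMap.det (fderiv ℝ T y : EuclideanSpace ℝ (Fin d) →ₗ[ℝ] EuclideanSpace ℝ (Fin d))| < 1 :=
  statement14_general d hd φ hφC1 hφsconv ψ hψ ξ lam hlam T hT

end
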